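/- arXiv:2202.06233 — 4 statements merged into one kernel-verified Lean document; each statement's English description precedes it below -/
import Mathlib

section
/- Let W ∈ ℝ^{d_out × d_in} have spectral norm at most B, let k ≥ 1 be an integer, and define f(u) = (Wu)^{∘k}, the entrywise k-th power of Wu. Then for any positive integer r, any vectors u_1,…,u_m ∈ ℝ^{d_in} and scalars ε_1,…,ε_m, it holds that ∑_{ℓ_1,…,ℓ_r=1}^{d_out} (∑_i ε_i f(u_i)_{ℓ_1} ⋯ f(u_i)_{ℓ_r})² ≤ B^{2rk} · ∑_{ℓ_1,…,ℓ_{rk}=1}^{d_in} (∑_i ε_i u_{i,ℓ_1} ⋯ u_{i,ℓ_{rk}})². -/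
/-- Euclidean norm of a vector in `ℝ^d`. -/
noncomputable def euclNorm {d : ℕ} (x : Fin d → ℝ) : ℝ := Real.sqrt (∑ i, x i ^ 2)

/-- Spectral norm of a matrix: `sup_{‖x‖=1} ‖Mx‖`. -/
noncomputable def specNorm {n d : ℕ} (M : Matrix (Fin n) (Fin d) ℝ) : ℝ :=
  sSup {r : ℝ | ∃ x : Fin d → ℝ, euclNorm x = 1 ∧ r = euclNorm (M.mulVec x)}

lemma lemA {dout din : ℕ} {B : ℝ} {W : Matrix (Fin dout) (Fin din) ℝ}
    (hW : specNorm W ≤ B) (x : Fin din → ℝ) :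
    ∑ ℓ, (W.mulVec x ℓ) ^ 2 ≤ B ^ 2 * ∑ s, (x s) ^ 2 := by
  rcases eq_or_ne x 0 with rfl | hx
  · simp [Matrix.mulVec_zero]
  · -- c > 0
    have hsum : 0 < ∑ s, (x s) ^ 2 := by
      have h0 : ∃ s, x s ≠ 0 := by
        by_contra h; push_neg at h; exact hx (funext h)
      obtain ⟨s0, hs0⟩ := h0
      exact Finset.sum_pos' (fun s _ => sq_nonneg _)
        ⟨s0, Finset.mem_univ s0, by positivity⟩
    set c : ℝ := Real.sqrt (∑ s, (x s) ^ 2) with hc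
    have hcpos : 0 < c := Real.sqrt_pos.mpr hsum
    have hc2 : c ^ 2 = ∑ s, (x s) ^ 2 := Real.sq_sqrt hsum.le
    set y : Fin din → ℝ := fun s => x s / c with hy
    have hyn : euclNorm y = 1 := by
      unfold euclNorm
      have : ∑ s, (y s) ^ 2 = (∑ s, (x s) ^ 2) / c ^ 2 := by
        rw [Finset.sum_div]; exact Finset.sum_congr rfl fun s _ => div_pow _ _ _
      rw [this, hc2, div_self (by positivity)]
      exact Real.sqrt_one
    -- bddAbove
    have hbdd : BddAbove {r : ℝ | ∃ z : Fin din → ℝ, euclNorm z = 1 ∧ r = euclNorm (W.mulVec z)} := by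
      refine ⟨Real.sqrt (∑ ℓ, ∑ s, (W ℓ s) ^ 2), ?_⟩
      rintro r ⟨z, hz, rfl⟩
      have hz2 : ∑ s, (z s) ^ 2 = 1 := by
        have := congrArg (· ^ 2) hz
        simpa [euclNorm, Real.sq_sqrt (Finset.sum_nonneg fun s _ => sq_nonneg (z s))] using this
      unfold euclNorm
      apply Real.sqrt_le_sqrt
      apply Finset.sum_le_sum
      intro ℓ _
      calc (W.mulVec z ℓ) ^ 2 = (∑ s, W ℓ s * z s) ^ 2 := by
            simp [Matrix.mulVec, dotProduct]
        _ ≤ (∑ s, (W ℓ s) ^ 2) * (∑ s, (z s) ^ 2) := by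
            have h := Finset.sum_mul_sq_le_sq_mul_sq Finset.univ (fun s => W ℓ s) z
            simpa using h
        _ = ∑ s, (W ℓ s) ^ 2 := by rw [hz2, mul_one]
    have hmem : euclNorm (W.mulVec y) ∈ {r : ℝ | ∃ z : Fin din → ℝ, euclNorm z = 1 ∧ r = euclNorm (W.mulVec z)} :=
      ⟨y, hyn, rfl⟩
    have hle : euclNorm (W.mulVec y) ≤ B := le_trans (le_csSup hbdd hmem) hW
    have hB0 : 0 ≤ B := le_trans (Real.sqrt_nonneg _) hle
    -- W.mulVec y = W.mulVec x / c
    have hmv : ∀ ℓ, W.mulVec y ℓ = W.mulVec x ℓ / c := by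
      intro ℓ
      simp only [Matrix.mulVec, dotProduct, hy]
      rw [Finset.sum_div]
      exact Finset.sum_congr rfl fun s _ => (mul_div_assoc _ _ _).symm
    have hsq : (∑ ℓ, (W.mulVec x ℓ) ^ 2) / c ^ 2 ≤ B ^ 2 := by
      have h1 : euclNorm (W.mulVec y) ^ 2 = ∑ ℓ, (W.mulVec y ℓ) ^ 2 :=
        Real.sq_sqrt (Finset.sum_nonneg fun ℓ _ => sq_nonneg _)
      have h2 : ∑ ℓ, (W.mulVec y ℓ) ^ 2 = (∑ ℓ, (W.mulVec x ℓ) ^ 2) / c ^ 2 := by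
        rw [Finset.sum_div]
        exact Finset.sum_congr rfl fun ℓ _ => by rw [hmv ℓ, div_pow]
      calc (∑ ℓ, (W.mulVec x ℓ) ^ 2) / c ^ 2 = euclNorm (W.mulVec y) ^ 2 := by rw [h1, h2]
        _ ≤ B ^ 2 := pow_le_pow_left₀ (Real.sqrt_nonneg _) hle 2
    rw [← hc2]
    calc ∑ ℓ, (W.mulVec x ℓ) ^ 2 = ((∑ ℓ, (W.mulVec x ℓ) ^ 2) / c ^ 2) * c ^ 2 := by
          field_simp
      _ ≤ B ^ 2 * c ^ 2 := by
          apply mul_le_mul_of_nonneg_right hsq (by positivity)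

lemma keyLem {dout din : ℕ} {B : ℝ}
    (W : Matrix (Fin dout) (Fin din) ℝ)
    (hB : ∀ x : Fin din → ℝ, ∑ ℓ, (W.mulVec x ℓ) ^ 2 ≤ B ^ 2 * ∑ s, (x s) ^ 2) :
    ∀ (N : ℕ) (T : (Fin N → Fin din) → ℝ),
      ∑ lam : Fin N → Fin dout,
          (∑ s : Fin N → Fin din, (∏ t, W (lam t) (s t)) * T s) ^ 2
        ≤ B ^ (2 * N) * ∑ s, (T s) ^ 2 := by
  have hB2 : 0 ≤ B ^ 2 := sq_nonneg B
  intro N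
  induction N with
  | zero =>
    intro T
    simp
  | succ N ih =>
    intro T
    set g : (Fin N → Fin dout) → Fin din → ℝ := fun lam' s0 =>
      ∑ s' : Fin N → Fin din, (∏ t, W (lam' t) (s' t)) * T (Fin.cons s0 s') with hg
    have esum : ∀ (α : Type) [Fintype α] (F : (Fin (N+1) → α) → ℝ),
        ∑ f : Fin (N+1) → α, F f = ∑ a : α, ∑ f' : Fin N → α, F (Fin.cons a f') := by
      intro α _ F
      rw [← (Fin.consEquiv (fun _ : Fin (N+1) => α)).sum_comp F]
      rw [Fintype.sum_prod_type]
      rfl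
    have inner_eq : ∀ (ℓ0 : Fin dout) (lam' : Fin N → Fin dout),
        (∑ s : Fin (N+1) → Fin din, (∏ t, W ((Fin.cons ℓ0 lam' : Fin (N+1) → Fin dout) t) (s t)) * T s)
          = W.mulVec (g lam') ℓ0 := by
      intro ℓ0 lam'
      rw [esum (Fin din)]
      simp only [Matrix.mulVec, dotProduct, hg, Finset.mul_sum]
      refine Finset.sum_congr rfl fun s0 _ => Finset.sum_congr rfl fun s' _ => ?_
      rw [Fin.prod_univ_succ]
      simp [mul_assoc]
    calc ∑ lam : Fin (N+1) → Fin dout,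
            (∑ s : Fin (N+1) → Fin din, (∏ t, W (lam t) (s t)) * T s) ^ 2
        = ∑ ℓ0 : Fin dout, ∑ lam' : Fin N → Fin dout, (W.mulVec (g lam') ℓ0) ^ 2 := by
          rw [esum (Fin dout)]
          exact Finset.sum_congr rfl fun ℓ0 _ => Finset.sum_congr rfl fun lam' _ => by
            rw [inner_eq ℓ0 lam']
      _ = ∑ lam' : Fin N → Fin dout, ∑ ℓ0 : Fin dout, (W.mulVec (g lam') ℓ0) ^ 2 :=
          Finset.sum_comm
      _ ≤ ∑ lam' : Fin N → Fin dout, B ^ 2 * ∑ s0, (g lam' s0) ^ 2 :=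
          Finset.sum_le_sum fun lam' _ => hB (g lam')
      _ = B ^ 2 * ∑ s0 : Fin din, ∑ lam' : Fin N → Fin dout, (g lam' s0) ^ 2 := by
          rw [← Finset.mul_sum, Finset.sum_comm]
      _ ≤ B ^ 2 * ∑ s0 : Fin din, (B ^ (2 * N) * ∑ s' : Fin N → Fin din, (T (Fin.cons s0 s')) ^ 2) := by
          apply mul_le_mul_of_nonneg_left _ hB2
          exact Finset.sum_le_sum fun s0 _ => ih (fun s' => T (Fin.cons s0 s'))
      _ = B ^ (2 * (N+1)) * ∑ s : Fin (N+1) → Fin din, (T s) ^ 2 := by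
          rw [esum (Fin din)]
          rw [← Finset.mul_sum, ← mul_assoc, ← pow_add]
          ring_nf


/-- For `f(u) = (Wu)^{∘k}` with `‖W‖ ≤ B`:
`∑_{ℓ_1..ℓ_r} (∑_i ε_i f(u_i)_{ℓ_1}⋯f(u_i)_{ℓ_r})²
  ≤ B^{2rk} ∑_{ℓ_1..ℓ_{rk}} (∑_i ε_i u_{i,ℓ_1}⋯u_{i,ℓ_{rk}})²`. -/
theorem stmt4 (dout din m k r : ℕ) (hk : 1 ≤ k) (hr : 1 ≤ r) (B : ℝ)
    (W : Matrix (Fin dout) (Fin din) ℝ) (hW : specNorm W ≤ B)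
    (u : Fin m → Fin din → ℝ) (ε : Fin m → ℝ) :
    ∑ ℓ : Fin r → Fin dout, (∑ i, ε i * ∏ t, (W.mulVec (u i) (ℓ t)) ^ k) ^ 2
      ≤ B ^ (2 * r * k) *
        ∑ ℓ : Fin (r * k) → Fin din, (∑ i, ε i * ∏ t, u i (ℓ t)) ^ 2 := by
  have keyLem := keyLem W (lemA hW)

  set T : (Fin (r * k) → Fin din) → ℝ := fun s => ∑ i, ε i * ∏ t, u i (s t) with hT
  set F : (Fin (r * k) → Fin dout) → ℝ := fun lam =>
    (∑ s : Fin (r * k) → Fin din, (∏ t, W (lam t) (s t)) * T s) ^ 2 with hF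
  set π : Fin (r * k) → Fin r := fun t' => (finProdFinEquiv.symm t').1 with hπ
  set ι : (Fin r → Fin dout) → (Fin (r * k) → Fin dout) := fun ℓ t' => ℓ (π t') with hι
  have hπe : ∀ (a : Fin r) (b : Fin k), π (finProdFinEquiv (a, b)) = a := by
    intro a b
    show (finProdFinEquiv.symm (finProdFinEquiv (a, b))).1 = a
    rw [Equiv.symm_apply_apply]
  have hinj : ∀ x ∈ Finset.univ, ∀ y ∈ Finset.univ, ι x = ι y → (x : Fin r → Fin dout) = y := by
    intro x _ y _ h
    funext a
    have := congrFun h (finProdFinEquiv (a, ⟨0, hk⟩))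
    simpa [hι, hπe] using this
  have hsummand : ∀ ℓ : Fin r → Fin dout,
      F (ι ℓ) = (∑ i, ε i * ∏ t, (W.mulVec (u i) (ℓ t)) ^ k) ^ 2 := by
    intro ℓ
    simp only [hF]
    congr 1
    calc ∑ s : Fin (r * k) → Fin din, (∏ t', W (ι ℓ t') (s t')) * T s
        = ∑ i, ε i * ∑ s : Fin (r * k) → Fin din, ∏ t', W (ι ℓ t') (s t') * u i (s t') := by
          rw [hT]
          simp only [Finset.mul_sum]
          rw [Finset.sum_comm]
          refine Finset.sum_congr rfl fun i _ => Finset.sum_congr rfl fun s _ => ?_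
          rw [Finset.prod_mul_distrib]
          ring
      _ = ∑ i, ε i * ∏ t', (∑ c, W (ι ℓ t') c * u i c) := by
          refine Finset.sum_congr rfl fun i _ => ?_
          congr 1
          rw [Finset.prod_univ_sum]
          rw [← Fintype.piFinset_univ]
      _ = ∑ i, ε i * ∏ t', W.mulVec (u i) (ℓ (π t')) := by
          refine Finset.sum_congr rfl fun i _ => ?_
          simp [Matrix.mulVec, dotProduct, hι]
      _ = ∑ i, ε i * ∏ t, (W.mulVec (u i) (ℓ t)) ^ k := by
          refine Finset.sum_congr rfl fun i _ => ?_
          congr 1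
          rw [← Equiv.prod_comp finProdFinEquiv (fun t' => W.mulVec (u i) (ℓ (π t')))]
          rw [Fintype.prod_prod_type]
          refine Finset.prod_congr rfl fun a _ => ?_
          simp [hπe]
  calc ∑ ℓ : Fin r → Fin dout, (∑ i, ε i * ∏ t, (W.mulVec (u i) (ℓ t)) ^ k) ^ 2
      = ∑ ℓ : Fin r → Fin dout, F (ι ℓ) := by
        exact Finset.sum_congr rfl fun ℓ _ => (hsummand ℓ).symm
    _ = ∑ lam ∈ Finset.univ.image ι, F lam := (Finset.sum_image hinj).symm
    _ ≤ ∑ lam : Fin (r * k) → Fin dout, F lam :=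
        Finset.sum_le_sum_of_subset_of_nonneg (Finset.subset_univ _)
          (fun lam _ _ => sq_nonneg _)
    _ ≤ B ^ (2 * (r * k)) * ∑ s, (T s) ^ 2 := keyLem (r * k) T
    _ = B ^ (2 * r * k) * ∑ ℓ : Fin (r * k) → Fin din, (∑ i, ε i * ∏ t, u i (ℓ t)) ^ 2 := by
        rw [mul_assoc]
end

section
/- Let T be a set of vectors in ℝ^m containing the origin, let ε_1,…,ε_m be i.i.d. Rademacher variables, and let σ : ℝ → ℝ be L-Lipschitz with σ(0)=0. Then E_ε[ sup_{t∈T} (∑_{i=1}^m ε_i σ(t_i))² ] ≤ 2L² · E_ε[ (sup_{t∈T} ∑_{i=1}^m ε_i t_i)² ]. -/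
/-!
Write `S_t(ε) = ∑ i, ε i * σ (t i)`. Pointwise
`sup_t S_t(ε)² ≤ (sup_t S_t(ε))² + (sup_t S_t(-ε))²`, and `ε ↦ -ε` preserves the Rademacher
measure; this gives the factor `2`. What remains is the Ledoux–Talagrand contraction
`E g(sup_t ∑ ε_i σ(t_i)) ≤ E g(sup_t ∑ ε_i L t_i)` for convex increasing `g`, applied to
`g x = (max x 0)²`, which is `x²` on the suprema since `0 ∈ T`. The contraction is proved by
replacing `σ` by `x ↦ L x` one coordinate `k` at a time: for fixed other signs, the pair of
suprema at `ε_k = ±1` is weakly submajorized by the pair obtained after the replacement.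
-/

/-- Expectation over i.i.d. uniform `{-1,+1}` signs `ε : Fin m → ℝ`. -/
noncomputable def rademacherExp (m : ℕ) (f : (Fin m → ℝ) → ℝ) : ℝ :=
  (∑ ε : Fin m → Bool, f (fun i => if ε i then 1 else -1)) / 2 ^ m

open Finset Function Set Bornology
open scoped NNReal

theorem ConvexOn.map_add_map_le_of_mem_Icc {g : ℝ → ℝ} (hg : ConvexOn ℝ univ g) {a b p q : ℝ}
    (hp : p ∈ Icc a b) (hpq : p + q = a + b) : g p + g q ≤ g a + g b := by
  obtain ⟨hap, hpb⟩ := hp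
  rcases (hap.trans hpb).eq_or_lt with rfl | hab
  · rw [le_antisymm hpb hap, show q = a by linarith]
  -- `p` and `q` are the convex combinations of `a, b` with swapped weights `w, 1 - w`
  set w := (b - p) / (b - a)
  have hw0 : 0 ≤ w := div_nonneg (by linarith) (by linarith)
  have hw1 : 0 ≤ 1 - w := by rw [sub_nonneg, div_le_one (by linarith)]; linarith
  have hpw : p = w * a + (1 - w) * b := by simp only [w]; field_simp; ring
  have hp := hg.2 (mem_univ a) (mem_univ b) hw0 hw1 (add_sub_cancel w 1)
  have hq := hg.2 (mem_univ a) (mem_univ b) hw1 hw0 (sub_add_cancel 1 w)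
  simp only [smul_eq_mul, ← hpw] at hp hq
  rw [show (1 - w) * a + w * b = q by linarith] at hq
  linarith

theorem ConvexOn.map_add_map_le_of_le_max {g : ℝ → ℝ} (hg : ConvexOn ℝ univ g)
    (hgm : Monotone g) {x y a b : ℝ} (hx : x ≤ max a b) (hy : y ≤ max a b)
    (hxy : x + y ≤ a + b) : g x + g y ≤ g a + g b := by
  wlog hab : a ≤ b generalizing a b
  · rw [add_comm (g a)]
    exact this (max_comm a b ▸ hx) (max_comm a b ▸ hy) (by linarith) (by linarith)
  wlog hyx : x ≤ y generalizing x y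
  · rw [add_comm]; exact this hy hx (by linarith) (by linarith)
  rw [max_eq_right hab] at hy
  rcases le_or_gt y a with hya | hay
  · exact add_le_add (hgm (hyx.trans hya)) (hgm hy)
  · calc g x + g y ≤ g (a + b - y) + g y := by gcongr; exact hgm (by linarith)
      _ ≤ g a + g b := hg.map_add_map_le_of_mem_Icc ⟨by linarith, by linarith⟩ (by ring)

theorem LipschitzWith.abs_le_mul_abs {φ : ℝ → ℝ} {K : ℝ≥0} (hφ : LipschitzWith K φ)
    (hφ0 : φ 0 = 0) (x : ℝ) : |φ x| ≤ K * |x| := by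
  simpa [hφ0, Real.dist_eq] using hφ.dist_le_mul x 0

theorem lipschitzWith_const_mul (K : ℝ≥0) : LipschitzWith K fun x : ℝ => K * x :=
  LipschitzWith.of_dist_le_mul fun x y => by
    rw [Real.dist_eq, Real.dist_eq, ← mul_sub, abs_mul, NNReal.abs_eq]

theorem ConvexOn.map_ciSup_add_map_ciSup_le {α : Type*} [Nonempty α] {g : ℝ → ℝ}
    (hg : ConvexOn ℝ univ g) (hgm : Monotone g) {φ : ℝ → ℝ} {K : ℝ≥0} (hφ : LipschitzWith K φ)
    (hφ0 : φ 0 = 0) {u R : α → ℝ} (hu : BddAbove (range fun a => |u a|))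
    (hR : BddAbove (range R)) :
    g (⨆ a, φ (u a) + R a) + g (⨆ a, -φ (u a) + R a)
      ≤ g (⨆ a, K * u a + R a) + g (⨆ a, -(K * u a) + R a) := by
  obtain ⟨C, hC⟩ := hu
  obtain ⟨D, hD⟩ := hR
  have hbdd : ∀ c : α → ℝ, (∀ a, c a ≤ K * |u a|) → BddAbove (range fun a => c a + R a) :=
    fun c hc => ⟨K * C + D, forall_mem_range.2 fun a =>
      add_le_add ((hc a).trans (by gcongr; exact hC (mem_range_self a))) (hD (mem_range_self a))⟩
  have hA := le_ciSup (hbdd (fun a => K * u a) fun a => by gcongr; exact le_abs_self (u a))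
  have hB := le_ciSup (hbdd (fun a => -(K * u a)) fun a => by
    rw [← mul_neg]; gcongr; exact neg_le_abs (u a))
  set A := ⨆ a, K * u a + R a
  set B := ⨆ a, -(K * u a) + R a
  have le_max_of_abs_le : ∀ a c, |c| ≤ K * |u a| → c + R a ≤ max A B := by
    intro a c hc
    rcases le_total 0 (u a) with hua | hua
    · rw [abs_of_nonneg hua] at hc
      exact le_max_of_le_left (by linarith [le_abs_self c, hA a])
    · rw [abs_of_nonpos hua, mul_neg] at hc
      exact le_max_of_le_right (by linarith [le_abs_self c, hB a])
  refine hg.map_add_map_le_of_le_max hgm ?_ ?_ ?_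
  · exact ciSup_le fun a => le_max_of_abs_le a _ (hφ.abs_le_mul_abs hφ0 _)
  · exact ciSup_le fun a => le_max_of_abs_le a _ ((abs_neg _).le.trans (hφ.abs_le_mul_abs hφ0 _))
  · refine ciSup_add_ciSup_le fun a b => ?_
    have hlip : φ (u a) - φ (u b) ≤ K * |u a - u b| := by
      simpa [Real.dist_eq] using (le_abs_self _).trans (hφ.dist_le_mul (u a) (u b))
    rcases le_total (u b) (u a) with hab | hab
    · rw [abs_of_nonneg (sub_nonneg.2 hab)] at hlip
      linarith [hA a, hB b]
    · rw [abs_of_nonpos (sub_nonpos.2 hab)] at hlip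
      linarith [hA b, hB a]

theorem ciSup_sq_le_sq_add_sq {α : Type*} [Nonempty α] {f : α → ℝ} (hf : BddAbove (range f))
    (hf' : BddAbove (range fun a => -f a)) :
    ⨆ a, f a ^ 2 ≤ (⨆ a, f a) ^ 2 + (⨆ a, -f a) ^ 2 := by
  refine ciSup_le fun a => ?_
  have h := le_ciSup hf a
  have h' := le_ciSup hf' a
  rcases le_total 0 (f a) with ha | ha <;> nlinarith

theorem Bornology.IsBounded.bddAbove_range_comp {E : Type*} [PseudoMetricSpace E] [ProperSpace E]
    {s : Set E} (hs : IsBounded s) {F : E → ℝ} (hF : Continuous F) :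
    BddAbove (range fun x : s => F x) := by
  rw [← image_eq_range]
  exact (hs.isCompact_closure.bddAbove_image hF.continuousOn).mono (image_mono subset_closure)

section Rademacher

variable {ι : Type*} [Fintype ι]

def Bool.toSignReal (b : Bool) : ℝ := if b then 1 else -1

noncomputable def rademacherSum (ψ : ι → ℝ → ℝ) (ε : ι → Bool) (t : ι → ℝ) : ℝ :=
  ∑ i, (ε i).toSignReal * ψ i (t i)

noncomputable def rademacherSup (T : Set (ι → ℝ)) (ψ : ι → ℝ → ℝ) (ε : ι → Bool) : ℝ :=
  ⨆ t : T, rademacherSum ψ ε t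

theorem continuous_rademacherSum {ψ : ι → ℝ → ℝ} (hψ : ∀ i, Continuous (ψ i)) (ε : ι → Bool) :
    Continuous (rademacherSum ψ ε) := by
  unfold rademacherSum
  fun_prop

theorem rademacherSum_not (ψ : ι → ℝ → ℝ) (ε : ι → Bool) (t : ι → ℝ) :
    rademacherSum ψ (fun i => !ε i) t = -rademacherSum ψ ε t := by
  simp only [rademacherSum, ← sum_neg_distrib]
  refine sum_congr rfl fun i _ => ?_
  cases ε i <;> simp [Bool.toSignReal]

theorem rademacherSum_update [DecidableEq ι] (ψ : ι → ℝ → ℝ) (ε : ι → Bool) (k : ι) (b : Bool)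
    (t : ι → ℝ) :
    rademacherSum ψ (update ε k b) t
      = b.toSignReal * ψ k (t k) + rademacherSum (update ψ k 0) ε t := by
  simp only [rademacherSum, ← add_sum_erase _ _ (mem_univ k), update_self, Pi.zero_apply, mul_zero,
    zero_add]
  congr 1
  refine sum_congr rfl fun i hi => ?_
  rw [update_of_ne (ne_of_mem_erase hi), update_of_ne (ne_of_mem_erase hi)]

theorem rademacherSup_nonneg {T : Set (ι → ℝ)} (hT : IsBounded T) (hT0 : 0 ∈ T)
    {ψ : ι → ℝ → ℝ} (hψ : ∀ i, Continuous (ψ i)) (hψ0 : ∀ i, ψ i 0 = 0) (ε : ι → Bool) :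
    0 ≤ rademacherSup T ψ ε :=
  le_ciSup_of_le (hT.bddAbove_range_comp (continuous_rademacherSum hψ ε)) ⟨0, hT0⟩
    (by simp [rademacherSum, hψ0])

theorem rademacherSup_const_mul (T : Set (ι → ℝ)) {K : ℝ} (hK : 0 ≤ K) (ε : ι → Bool) :
    rademacherSup T (fun _ x => K * x) ε = K * rademacherSup T (fun _ x => x) ε := by
  simp only [rademacherSup, Real.mul_iSup_of_nonneg hK, rademacherSum, mul_sum]
  congr! 3
  ring

variable [DecidableEq ι]

theorem Fintype.sum_update_true_add_update_false {M : Type*} [AddCommMonoid M]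
    (f : (ι → Bool) → M) (k : ι) :
    ∑ ε : ι → Bool, (f (update ε k true) + f (update ε k false)) = 2 • ∑ ε, f ε := by
  have hflip : Involutive fun ε : ι → Bool => update ε k (!ε k) := fun ε => by
    simp
  calc ∑ ε : ι → Bool, (f (update ε k true) + f (update ε k false))
      = ∑ ε : ι → Bool, (f ε + f (update ε k (!ε k))) := by
        refine Finset.sum_congr rfl fun ε _ => ?_
        cases h : ε k
        · rw [add_comm, ← h, update_eq_self, h]; rfl
        · rw [← h, update_eq_self, h]; rfl
    _ = 2 • ∑ ε, f ε := by
        rw [sum_add_distrib, two_nsmul]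
        congr 1
        exact Equiv.sum_comp hflip.toPerm f

theorem Fintype.sum_comp_not {M : Type*} [AddCommMonoid M] (f : (ι → Bool) → M) :
    ∑ ε : ι → Bool, f (fun i => !ε i) = ∑ ε, f ε :=
  Equiv.sum_comp (Equiv.piCongrRight fun _ => Equiv.boolNot) f

variable {T : Set (ι → ℝ)} {g : ℝ → ℝ} {ψ : ι → ℝ → ℝ} {K : ℝ≥0}

theorem sum_map_rademacherSup_le_update [Nonempty T] (hT : IsBounded T)
    (hg : ConvexOn ℝ univ g) (hgm : Monotone g) (hψ : ∀ i, LipschitzWith K (ψ i))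
    (hψ0 : ∀ i, ψ i 0 = 0) (k : ι) :
    ∑ ε, g (rademacherSup T ψ ε) ≤ ∑ ε, g (rademacherSup T (update ψ k fun x => K * x) ε) := by
  have hpair : ∀ ε : ι → Bool,
      g (rademacherSup T ψ (update ε k true)) + g (rademacherSup T ψ (update ε k false))
        ≤ g (rademacherSup T (update ψ k fun x => K * x) (update ε k true))
          + g (rademacherSup T (update ψ k fun x => K * x) (update ε k false)) := by
    intro ε
    have hcont : ∀ i, Continuous (update ψ k 0 i) := fun i => by
      rw [update_apply]; split_ifs
      exacts [continuous_const, (hψ i).continuous]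
    have hu := hT.bddAbove_range_comp (F := fun t => |t k|) (by fun_prop)
    have hR := hT.bddAbove_range_comp (continuous_rademacherSum hcont ε)
    simpa [rademacherSup, rademacherSum_update, Bool.toSignReal] using
      hg.map_ciSup_add_map_ciSup_le hgm (hψ k) (hψ0 k) hu hR
  refine le_of_nsmul_le_nsmul_right two_ne_zero ?_
  simp only [← Fintype.sum_update_true_add_update_false _ k]
  exact Finset.sum_le_sum fun ε _ => hpair ε

theorem sum_map_rademacherSup_le [Nonempty T] (hT : IsBounded T)
    (hg : ConvexOn ℝ univ g) (hgm : Monotone g) (hψ : ∀ i, LipschitzWith K (ψ i))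
    (hψ0 : ∀ i, ψ i 0 = 0) :
    ∑ ε, g (rademacherSup T ψ ε) ≤ ∑ ε, g (rademacherSup T (fun _ x => K * x) ε) := by
  suffices ∀ s : Finset ι, ∑ ε, g (rademacherSup T ψ ε)
      ≤ ∑ ε, g (rademacherSup T (s.piecewise (fun _ x => K * x) ψ) ε) by
    simpa using this Finset.univ
  intro s
  induction s using Finset.induction_on with
  | empty => simp
  | insert k s _ ih =>
    rw [Finset.piecewise_insert]
    refine ih.trans (sum_map_rademacherSup_le_update hT hg hgm (fun i => ?_) (fun i => ?_) k)
    all_goals by_cases hi : i ∈ s <;> simp [hi, hψ, hψ0, lipschitzWith_const_mul]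

theorem sum_sq_rademacherSup_le (hT : IsBounded T) (hT0 : 0 ∈ T)
    (hψ : ∀ i, LipschitzWith K (ψ i)) (hψ0 : ∀ i, ψ i 0 = 0) :
    ∑ ε, rademacherSup T ψ ε ^ 2 ≤ K ^ 2 * ∑ ε, rademacherSup T (fun _ x => x) ε ^ 2 := by
  have : Nonempty T := ⟨⟨0, hT0⟩⟩
  have hg : ConvexOn ℝ univ fun x : ℝ => max x 0 ^ 2 :=
    ((convexOn_id convex_univ).sup (convexOn_const 0 convex_univ)).pow
      (fun x _ => le_max_right x 0) 2
  have hgm : Monotone fun x : ℝ => max x 0 ^ 2 := fun x y h =>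
    pow_le_pow_left₀ (le_max_right x 0) (max_le_max_right 0 h) 2
  have hcomp := sum_map_rademacherSup_le hT hg hgm hψ hψ0
  simp only [max_eq_left (rademacherSup_nonneg hT hT0 (fun i => (hψ i).continuous) hψ0 _),
    max_eq_left (rademacherSup_nonneg hT hT0 (fun i => (lipschitzWith_const_mul K).continuous)
      (fun _ => mul_zero _) _)] at hcomp
  simpa only [rademacherSup_const_mul T K.coe_nonneg, mul_pow, ← mul_sum] using hcomp

theorem sum_ciSup_sq_rademacherSum_le (hT : IsBounded T) (hT0 : 0 ∈ T)
    (hψ : ∀ i, LipschitzWith K (ψ i)) (hψ0 : ∀ i, ψ i 0 = 0) :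
    ∑ ε, ⨆ t : T, rademacherSum ψ ε t ^ 2
      ≤ 2 * K ^ 2 * ∑ ε, rademacherSup T (fun _ x => x) ε ^ 2 := by
  have : Nonempty T := ⟨⟨0, hT0⟩⟩
  have hbdd := fun ε =>
    hT.bddAbove_range_comp (continuous_rademacherSum (fun i => (hψ i).continuous) ε)
  calc _ ≤ ∑ ε, (rademacherSup T ψ ε ^ 2 + rademacherSup T ψ (fun i => !ε i) ^ 2) :=
        Finset.sum_le_sum fun ε _ => by
          simpa only [rademacherSup, rademacherSum_not] using ciSup_sq_le_sq_add_sq (hbdd ε)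
            (by simpa only [rademacherSum_not] using hbdd fun i => !ε i)
    _ = 2 * ∑ ε, rademacherSup T ψ ε ^ 2 := by
        rw [sum_add_distrib, Fintype.sum_comp_not fun ε => rademacherSup T ψ ε ^ 2]
        ring
    _ ≤ 2 * K ^ 2 * ∑ ε, rademacherSup T (fun _ x => x) ε ^ 2 := by
        rw [mul_assoc]
        gcongr
        exact sum_sq_rademacherSup_le hT hT0 hψ hψ0

end Rademacher

/-- Squared contraction inequality: for a (bounded) set `T ∋ 0` and `L`-Lipschitz `σ`
with `σ(0)=0`, `E_ε sup_{t∈T} (∑_i ε_i σ(t_i))² ≤ 2L² E_ε (sup_{t∈T} ∑_i ε_i t_i)²`. -/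
theorem stmt8 (m : ℕ) (T : Set (Fin m → ℝ)) (hT0 : (0 : Fin m → ℝ) ∈ T)
    (hTb : Bornology.IsBounded T) (L : ℝ) (σ : ℝ → ℝ)
    (hσ : ∀ a b : ℝ, |σ a - σ b| ≤ L * |a - b|) (hσ0 : σ 0 = 0) :
    rademacherExp m (fun ε => ⨆ t : T, (∑ i, ε i * σ (t.1 i)) ^ 2)
      ≤ 2 * L ^ 2 * rademacherExp m (fun ε => (⨆ t : T, ∑ i, ε i * t.1 i) ^ 2) := by
  have hL : 0 ≤ L := by simpa [hσ0] using (abs_nonneg _).trans (hσ 1 0)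
  have hσL : LipschitzWith L.toNNReal σ := LipschitzWith.of_dist_le_mul fun a b => by
    simpa only [Real.coe_toNNReal _ hL, Real.dist_eq] using hσ a b
  have key := sum_ciSup_sq_rademacherSum_le hTb hT0 (fun _ => hσL) (fun _ => hσ0)
  rw [Real.coe_toNNReal _ hL] at key
  rw [rademacherExp, rademacherExp, ← mul_div_assoc]
  exact div_le_div_of_nonneg_right key (by positivity)
end

section
/- Fix b, B, b_x > 0, integers n, d, m ≥ 1, and suppose σ(z) = ∑_{j=1}^∞ a_j z^j converges for all |z| ≤ B·b_x, with σ̃(z) := ∑_{j=1}^∞ |a_j| z^j finite at z = B·b_x. Let H be the class of functions x ↦ uᵀσ(Wx) with u ∈ ℝ^n, ‖u‖ ≤ b, W ∈ ℝ^{n×d}, spectral norm ‖W‖ ≤ B (σ applied entrywise). Then the Rademacher complexity of H on any m points of Euclidean norm at most b_x is at most b·σ̃(B b_x)/√m. -/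
/-!
Expanding `σ` in its power series, the `j`-th term of `∑ᵢ εᵢ uᵀσ(W xᵢ)` is
`a_j ∑ₗ uₗ (W^{⊗j} Tⱼ)_{(l,…,l)}` with `Tⱼ = ∑ᵢ εᵢ xᵢ^{⊗j}`. The diagonal entries are among
all entries of `W^{⊗j} Tⱼ`, and `‖W^{⊗j}‖ ≤ ‖W‖^j`, so by Cauchy–Schwarz this term is at most
`|a_j| b B^j ‖Tⱼ‖`, uniformly over the class. For Rademacher signs the parallelogram law gives
`E‖Tⱼ‖² = ∑ᵢ ‖xᵢ‖^{2j} ≤ m b_x^{2j}`, hence `E‖Tⱼ‖ ≤ √m b_x^j`, and summing over `j` gives the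
bound.
-/

open Finset
open Matrix
open scoped Kronecker

namespace Matrix

variable {ι κ : Type*}

def kroneckerPow {R : Type*} [CommMonoid R] (W : Matrix ι κ R) (j : ℕ) :
    Matrix (Fin j → ι) (Fin j → κ) R :=
  of fun g f => ∏ k, W (g k) (f k)

@[simp]
lemma kroneckerPow_apply {R : Type*} [CommMonoid R] (W : Matrix ι κ R) (j : ℕ)
    (g : Fin j → ι) (f : Fin j → κ) : kroneckerPow W j g f = ∏ k, W (g k) (f k) := rfl

lemma kroneckerPow_succ {R : Type*} [CommMonoid R] (W : Matrix ι κ R) (j : ℕ) :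
    kroneckerPow W (j + 1) = (W ⊗ₖ kroneckerPow W j).submatrix
      (Fin.consEquiv fun _ => ι).symm (Fin.consEquiv fun _ => κ).symm := by
  ext g f
  simp [Fin.prod_univ_succ, Fin.consEquiv, Fin.tail]

lemma sum_sq_kronecker_mulVec_le {ι' κ' : Type*} [Fintype ι] [Fintype κ] [Fintype ι']
    [Fintype κ'] {A : Matrix ι κ ℝ} {K : Matrix ι' κ' ℝ} {C D : ℝ}
    (hC : 0 ≤ C) (hA : ∀ v, ∑ i, (A *ᵥ v) i ^ 2 ≤ C * ∑ k, v k ^ 2)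
    (hK : ∀ v, ∑ i, (K *ᵥ v) i ^ 2 ≤ D * ∑ k, v k ^ 2) (T : κ × κ' → ℝ) :
    ∑ p, ((A ⊗ₖ K) *ᵥ T) p ^ 2 ≤ C * D * ∑ q, T q ^ 2 := by
  set S : κ → ι' → ℝ := fun k => K *ᵥ fun k' => T (k, k')
  have hS : ∀ i i', ((A ⊗ₖ K) *ᵥ T) (i, i') = (A *ᵥ fun k => S k i') i := by
    simp [S, mulVec, dotProduct, Fintype.sum_prod_type, mul_sum, mul_assoc]
  calc ∑ p, ((A ⊗ₖ K) *ᵥ T) p ^ 2 = ∑ i', ∑ i, (A *ᵥ fun k => S k i') i ^ 2 := by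
        simp only [Fintype.sum_prod_type_right, hS]
    _ ≤ ∑ i', C * ∑ k, S k i' ^ 2 := sum_le_sum fun i' _ => hA _
    _ = C * ∑ k, ∑ i', S k i' ^ 2 := by rw [← mul_sum, sum_comm]
    _ ≤ C * ∑ k, D * ∑ k', T (k, k') ^ 2 := by gcongr with k; exact hK _
    _ = C * D * ∑ q, T q ^ 2 := by rw [Fintype.sum_prod_type, ← mul_sum, mul_assoc]

lemma sum_sq_kroneckerPow_mulVec_le [Fintype ι] [Fintype κ] {W : Matrix ι κ ℝ} {C : ℝ}
    (hC : 0 ≤ C) (hW : ∀ v, ∑ i, (W *ᵥ v) i ^ 2 ≤ C * ∑ k, v k ^ 2) (j : ℕ) (T : (Fin j → κ) → ℝ) :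
    ∑ g, (kroneckerPow W j *ᵥ T) g ^ 2 ≤ C ^ j * ∑ f, T f ^ 2 := by
  induction j with
  | zero => simp [mulVec, dotProduct]
  | succ j ih =>
    rw [kroneckerPow_succ, submatrix_mulVec_equiv, pow_succ', Function.comp_def,
      Equiv.sum_comp (Fin.consEquiv fun _ => ι).symm (fun p => (_ *ᵥ _) p ^ 2),
      ← Equiv.sum_comp (Fin.consEquiv fun _ => κ) (fun f => T f ^ 2)]
    exact sum_sq_kronecker_mulVec_le hC hW (fun v => ih v) _

end Matrix

def tensorPow {ι R : Type*} [CommMonoid R] (x : ι → R) (j : ℕ) : (Fin j → ι) → R :=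
  fun f => ∏ k, x (f k)

lemma Matrix.mulVec_apply_pow {ι κ R : Type*} [Fintype κ] [CommSemiring R]
    (W : Matrix ι κ R) (x : κ → R) (l : ι) (j : ℕ) :
    (W *ᵥ x) l ^ j = (W.kroneckerPow j *ᵥ tensorPow x j) (fun _ => l) := by
  simp [mulVec, dotProduct, Fintype.sum_pow, tensorPow, prod_mul_distrib]

lemma sum_tensorPow_sq {ι : Type*} [Fintype ι] (x : ι → ℝ) (j : ℕ) :
    ∑ f, tensorPow x j f ^ 2 = (∑ t, x t ^ 2) ^ j := by
  simp [Fintype.sum_pow, tensorPow, prod_pow]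

section Rademacher

variable {m : ℕ}

lemma sum_bool_fun_succ {M : Type*} [AddCommMonoid M] (F : (Fin (m + 1) → Bool) → M) :
    ∑ ε, F ε = ∑ ε, (F (Fin.cons true ε) + F (Fin.cons false ε)) := by
  rw [← (Fin.consEquiv fun _ => Bool).sum_comp, Fintype.sum_prod_type, sum_comm]
  simp [Fin.consEquiv]

lemma sum_norm_sum_signs_smul_sq {E : Type*} [NormedAddCommGroup E] [InnerProductSpace ℝ E]
    (q : Fin m → E) :
    ∑ ε : Fin m → Bool, ‖∑ i, (if ε i then (1 : ℝ) else -1) • q i‖ ^ 2 =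
      2 ^ m * ∑ i, ‖q i‖ ^ 2 := by
  induction m with
  | zero => simp
  | succ m ih =>
    set R : (Fin m → Bool) → E := fun ε => ∑ i, (if ε i then (1 : ℝ) else -1) • q i.succ
    have hpair : ∀ ε, ‖q 0 + R ε‖ ^ 2 + ‖-q 0 + R ε‖ ^ 2 = 2 * (‖R ε‖ ^ 2 + ‖q 0‖ ^ 2) := by
      intro ε
      rw [add_comm (q 0), neg_add_eq_sub, ← parallelogram_law_with_norm ℝ]
    rw [sum_bool_fun_succ]
    simp only [Fin.sum_univ_succ, Fin.cons_zero, Fin.cons_succ, if_true, Bool.false_eq_true,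
      if_false, one_smul, neg_smul]
    rw [sum_congr rfl fun ε _ => hpair ε, ← mul_sum, sum_add_distrib, ih, sum_const, card_univ,
      Fintype.card_fun, Fintype.card_bool, Fintype.card_fin, nsmul_eq_mul]
    push_cast
    ring

lemma rademacherExp_mono {f g : (Fin m → ℝ) → ℝ} (h : ∀ ε, f ε ≤ g ε) :
    rademacherExp m f ≤ rademacherExp m g :=
  div_le_div_of_nonneg_right (sum_le_sum fun ε _ => h _) (by positivity)

lemma rademacherExp_const_mul (c : ℝ) (f : (Fin m → ℝ) → ℝ) :
    rademacherExp m (fun ε => c * f ε) = c * rademacherExp m f := by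
  simp only [rademacherExp, ← mul_sum, mul_div_assoc]

lemma hasSum_rademacherExp {β : Type*} {g : β → (Fin m → ℝ) → ℝ} {s : (Fin m → ℝ) → ℝ}
    (hg : ∀ ε, HasSum (fun j => g j ε) (s ε)) :
    HasSum (fun j => rademacherExp m (g j)) (rademacherExp m s) := by
  unfold rademacherExp
  exact (hasSum_sum fun ε _ => hg _).div_const _

lemma sq_rademacherExp_le (f : (Fin m → ℝ) → ℝ) :
    rademacherExp m f ^ 2 ≤ rademacherExp m (fun ε => f ε ^ 2) := by
  set F : (Fin m → Bool) → ℝ := fun ε => f fun i => if ε i then 1 else -1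
  have h : (∑ ε, F ε) ^ 2 ≤ 2 ^ m * ∑ ε, F ε ^ 2 := by
    simpa using sq_sum_le_card_mul_sum_sq (s := univ) (f := F)
  calc rademacherExp m f ^ 2 = (∑ ε, F ε) ^ 2 / 2 ^ m / 2 ^ m := by
        rw [rademacherExp, div_pow, sq (2 ^ m : ℝ), div_div]
    _ ≤ 2 ^ m * (∑ ε, F ε ^ 2) / 2 ^ m / 2 ^ m := by gcongr
    _ = rademacherExp m (fun ε => f ε ^ 2) := by
      rw [rademacherExp, mul_div_cancel_left₀ _ (by positivity)]

lemma rademacherExp_norm_sum_smul_le {E : Type*} [NormedAddCommGroup E] [InnerProductSpace ℝ E]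
    (q : Fin m → E) :
    rademacherExp m (fun ε => ‖∑ i, ε i • q i‖) ≤ √(∑ i, ‖q i‖ ^ 2) := by
  refine (le_abs_self _).trans (Real.abs_le_sqrt ((sq_rademacherExp_le _).trans_eq ?_))
  rw [rademacherExp, sum_norm_sum_signs_smul_sq]
  field_simp

end Rademacher

section Euclidean

variable {n d : ℕ}

lemma euclNorm_eq_norm (x : Fin d → ℝ) : euclNorm x = ‖WithLp.toLp 2 x‖ := by
  simp [euclNorm, EuclideanSpace.norm_eq]

lemma euclNorm_nonneg (x : Fin d → ℝ) : 0 ≤ euclNorm x := Real.sqrt_nonneg _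

lemma sq_euclNorm (x : Fin d → ℝ) : euclNorm x ^ 2 = ∑ i, x i ^ 2 :=
  Real.sq_sqrt (by positivity)

lemma abs_le_euclNorm (x : Fin d → ℝ) (i : Fin d) : |x i| ≤ euclNorm x :=
  Real.abs_le_sqrt (single_le_sum (fun j _ => sq_nonneg (x j)) (mem_univ i))

lemma euclNorm_mulVec_le_of_specNorm_le {W : Matrix (Fin n) (Fin d) ℝ} {B : ℝ}
    (hW : specNorm W ≤ B) (y : Fin d → ℝ) : euclNorm (W *ᵥ y) ≤ B * euclNorm y := by
  set L := LinearMap.toContinuousLinearMap (Matrix.toEuclideanLin W)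
  have hL : ∀ v, euclNorm (W *ᵥ v) = ‖L (WithLp.toLp 2 v)‖ := fun v => by
    simp [L, euclNorm_eq_norm]
  have hbdd : BddAbove {r : ℝ | ∃ v : Fin d → ℝ, euclNorm v = 1 ∧ r = euclNorm (W *ᵥ v)} := by
    refine ⟨‖L‖, ?_⟩
    rintro r ⟨v, hv, rfl⟩
    simpa [hL, ← euclNorm_eq_norm, hv] using L.le_opNorm (WithLp.toLp 2 v)
  rcases eq_or_ne y 0 with rfl | hy
  · simp [euclNorm]
  have hy' : 0 < euclNorm y := by
    rw [euclNorm_eq_norm, norm_pos_iff]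
    exact fun h => hy (congrArg WithLp.ofLp h)
  have hunit : euclNorm ((euclNorm y)⁻¹ • y) = 1 := by
    rw [euclNorm_eq_norm, WithLp.toLp_smul, norm_smul, ← euclNorm_eq_norm, norm_inv,
      Real.norm_of_nonneg hy'.le, inv_mul_cancel₀ hy'.ne']
  have h := (le_csSup hbdd ⟨_, hunit, rfl⟩).trans hW
  rw [Matrix.mulVec_smul, euclNorm_eq_norm, WithLp.toLp_smul, norm_smul, ← euclNorm_eq_norm,
    norm_inv, Real.norm_of_nonneg hy'.le, inv_mul_le_iff₀ hy'] at h
  linarith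

lemma sum_sq_mulVec_le_of_specNorm_le {W : Matrix (Fin n) (Fin d) ℝ} {B : ℝ}
    (hW : specNorm W ≤ B) (y : Fin d → ℝ) :
    ∑ i, (W *ᵥ y) i ^ 2 ≤ B ^ 2 * ∑ k, y k ^ 2 := by
  rw [← sq_euclNorm, ← sq_euclNorm, ← mul_pow]
  exact pow_le_pow_left₀ (euclNorm_nonneg _) (euclNorm_mulVec_le_of_specNorm_le hW y) 2

lemma norm_toLp_tensorPow (x : Fin d → ℝ) (j : ℕ) :
    ‖WithLp.toLp 2 (tensorPow x j)‖ = euclNorm x ^ j := by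
  rw [← pow_left_inj₀ (norm_nonneg _) (pow_nonneg (euclNorm_nonneg x) j) two_ne_zero,
    EuclideanSpace.real_norm_sq_eq, ← pow_mul, mul_comm, pow_mul, sq_euclNorm]
  exact sum_tensorPow_sq x j

end Euclidean

section RademacherTensor

variable {ι κ : Type*} [Fintype ι] [Fintype κ] {m : ℕ}

def rademacherTensor (x : Fin m → κ → ℝ) (ε : Fin m → ℝ) (j : ℕ) :
    EuclideanSpace ℝ (Fin j → κ) :=
  ∑ i, ε i • WithLp.toLp 2 (tensorPow (x i) j)

lemma sum_sq_comp_const_le {j : ℕ} (hj : j ≠ 0) (v : (Fin j → ι) → ℝ) :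
    ∑ l, v (fun _ => l) ^ 2 ≤ ∑ g, v g ^ 2 := by
  have : Nonempty (Fin j) := ⟨⟨0, Nat.pos_of_ne_zero hj⟩⟩
  calc ∑ l, v (fun _ => l) ^ 2
      = ∑ g ∈ univ.map ⟨Function.const _, Function.const_injective⟩, v g ^ 2 :=
        by rw [sum_map]; rfl
    _ ≤ ∑ g, v g ^ 2 := sum_le_univ_sum_of_nonneg fun g => sq_nonneg _

lemma abs_sum_mul_mulVec_pow_le {u : ι → ℝ} {W : Matrix ι κ ℝ} {b B : ℝ} (hb : 0 ≤ b)
    (hB : 0 ≤ B) (hu : ∑ l, u l ^ 2 ≤ b ^ 2) (hW : ∀ v, ∑ l, (W *ᵥ v) l ^ 2 ≤ B ^ 2 * ∑ k, v k ^ 2)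
    (x : Fin m → κ → ℝ) (ε : Fin m → ℝ) {j : ℕ} (hj : j ≠ 0) :
    |∑ i, ε i * ∑ l, u l * (W *ᵥ x i) l ^ j| ≤ b * B ^ j * ‖rademacherTensor x ε j‖ := by
  set T : (Fin j → κ) → ℝ := ∑ i, ε i • tensorPow (x i) j
  set v : ι → ℝ := fun l => (W.kroneckerPow j *ᵥ T) fun _ => l
  have hv : ∑ i, ε i * ∑ l, u l * (W *ᵥ x i) l ^ j = ∑ l, u l * v l := by
    simp only [mulVec_apply_pow, v, T, mulVec_sum, mulVec_smul, Finset.sum_apply, Pi.smul_apply,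
      smul_eq_mul, mul_sum]
    rw [sum_comm]
    exact sum_congr rfl fun l _ => sum_congr rfl fun i _ => by ring
  have hT : ‖rademacherTensor x ε j‖ ^ 2 = ∑ f, T f ^ 2 := by
    simp [rademacherTensor, EuclideanSpace.real_norm_sq_eq, T]
  refine abs_le_of_sq_le_sq ?_ (by positivity)
  rw [hv]
  calc (∑ l, u l * v l) ^ 2 ≤ (∑ l, u l ^ 2) * ∑ l, v l ^ 2 := sum_mul_sq_le_sq_mul_sq _ _ _
    _ ≤ b ^ 2 * ((B ^ 2) ^ j * ∑ f, T f ^ 2) := by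
      gcongr
      exact (sum_sq_comp_const_le hj _).trans
        (sum_sq_kroneckerPow_mulVec_le (sq_nonneg B) hW j T)
    _ = (b * B ^ j * ‖rademacherTensor x ε j‖) ^ 2 := by
      rw [mul_pow, mul_pow, hT, ← pow_mul, mul_comm 2 j, pow_mul, mul_assoc]

end RademacherTensor

section TwoLayer

variable {n d m : ℕ} {b B bx : ℝ} {a : ℕ → ℝ} {x : Fin m → Fin d → ℝ}

lemma norm_rademacherTensor_le (hx : ∀ i, euclNorm (x i) ≤ bx) (ε : Fin m → ℝ) (j : ℕ) :
    ‖rademacherTensor x ε j‖ ≤ (∑ i, |ε i|) * bx ^ j := by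
  rw [rademacherTensor, sum_mul]
  refine (norm_sum_le _ _).trans (sum_le_sum fun i _ => ?_)
  rw [norm_smul, Real.norm_eq_abs, norm_toLp_tensorPow]
  gcongr
  · exact euclNorm_nonneg _
  · exact hx i

lemma rademacherExp_norm_rademacherTensor_le (hbx : 0 ≤ bx) (hx : ∀ i, euclNorm (x i) ≤ bx)
    (j : ℕ) : rademacherExp m (fun ε => ‖rademacherTensor x ε j‖) ≤ √m * bx ^ j := by
  calc rademacherExp m (fun ε => ‖rademacherTensor x ε j‖)
      ≤ √(∑ i, ‖WithLp.toLp 2 (tensorPow (x i) j)‖ ^ 2) := rademacherExp_norm_sum_smul_le _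
    _ ≤ √(∑ _i : Fin m, (bx ^ j) ^ 2) := by
      gcongr with i
      rw [norm_toLp_tensorPow]
      exact pow_le_pow_left₀ (euclNorm_nonneg _) (hx i) j
    _ = √m * bx ^ j := by
      rw [sum_const, card_univ, Fintype.card_fin, nsmul_eq_mul,
        Real.sqrt_mul (Nat.cast_nonneg m), Real.sqrt_sq (by positivity)]

lemma summable_mul_norm_rademacherTensor (hB : 0 ≤ B)
    (hsum : Summable fun j => |a j| * (B * bx) ^ j) (hx : ∀ i, euclNorm (x i) ≤ bx)
    (ε : Fin m → ℝ) : Summable fun j => |a j| * B ^ j * ‖rademacherTensor x ε j‖ := by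
  refine (hsum.mul_left (∑ i, |ε i|)).of_nonneg_of_le (fun j => by positivity) fun j => ?_
  calc |a j| * B ^ j * ‖rademacherTensor x ε j‖
        ≤ |a j| * B ^ j * ((∑ i, |ε i|) * bx ^ j) := by
          gcongr; exact norm_rademacherTensor_le hx ε j
    _ = (∑ i, |ε i|) * (|a j| * (B * bx) ^ j) := by ring

lemma sum_mul_neuron_le (hb : 0 ≤ b) (hB : 0 ≤ B) (ha0 : a 0 = 0) {σ : ℝ → ℝ}
    (hσ : ∀ z : ℝ, |z| ≤ B * bx → HasSum (fun j => a j * z ^ j) (σ z))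
    (hsum : Summable fun j => |a j| * (B * bx) ^ j) (hx : ∀ i, euclNorm (x i) ≤ bx)
    {u : Fin n → ℝ} (hu : euclNorm u ≤ b) {W : Matrix (Fin n) (Fin d) ℝ} (hW : specNorm W ≤ B)
    (ε : Fin m → ℝ) :
    ∑ i, ε i * ∑ l, u l * σ ((W *ᵥ x i) l) ≤
      b * ∑' j, |a j| * B ^ j * ‖rademacherTensor x ε j‖ := by
  have hz : ∀ i l, |(W *ᵥ x i) l| ≤ B * bx := fun i l =>
    (abs_le_euclNorm _ l).trans <| (euclNorm_mulVec_le_of_specNorm_le hW _).trans <|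
      mul_le_mul_of_nonneg_left (hx i) hB
  have hu' : ∑ l, u l ^ 2 ≤ b ^ 2 := by
    rw [← sq_euclNorm]; exact pow_le_pow_left₀ (euclNorm_nonneg _) hu 2
  have hLHS : HasSum (fun j => a j * ∑ i, ε i * ∑ l, u l * (W *ᵥ x i) l ^ j)
      (∑ i, ε i * ∑ l, u l * σ ((W *ᵥ x i) l)) := by
    have hterm : (fun j => a j * ∑ i, ε i * ∑ l, u l * (W *ᵥ x i) l ^ j) =
        fun j => ∑ i, ε i * ∑ l, u l * (a j * (W *ᵥ x i) l ^ j) := by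
      funext j
      simp only [mul_sum]
      exact sum_congr rfl fun i _ => sum_congr rfl fun l _ => by ring
    rw [hterm]
    exact hasSum_sum fun i _ =>
      (hasSum_sum fun l _ => (hσ _ (hz i l)).mul_left (u l)).mul_left (ε i)
  refine hasSum_le (fun j => ?_) hLHS
    ((summable_mul_norm_rademacherTensor hB hsum hx ε).hasSum.mul_left b)
  rcases eq_or_ne j 0 with rfl | hj
  · rw [ha0, zero_mul]; positivity
  calc a j * ∑ i, ε i * ∑ l, u l * (W *ᵥ x i) l ^ j
      ≤ |a j| * |∑ i, ε i * ∑ l, u l * (W *ᵥ x i) l ^ j| :=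
        (le_abs_self _).trans (abs_mul _ _).le
    _ ≤ |a j| * (b * B ^ j * ‖rademacherTensor x ε j‖) := by
      gcongr
      exact abs_sum_mul_mulVec_pow_le hb hB hu' (sum_sq_mulVec_le_of_specNorm_le hW) x ε hj
    _ = b * (|a j| * B ^ j * ‖rademacherTensor x ε j‖) := by ring

lemma rademacherExp_tsum_mul_norm_rademacherTensor_le (hB : 0 ≤ B) (hbx : 0 ≤ bx)
    (hsum : Summable fun j => |a j| * (B * bx) ^ j) (hx : ∀ i, euclNorm (x i) ≤ bx) :
    rademacherExp m (fun ε => ∑' j, |a j| * B ^ j * ‖rademacherTensor x ε j‖) ≤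
      √m * ∑' j, |a j| * (B * bx) ^ j := by
  refine hasSum_le (fun j => ?_)
    (hasSum_rademacherExp fun ε => (summable_mul_norm_rademacherTensor hB hsum hx ε).hasSum)
    (hsum.hasSum.mul_left √m)
  rw [rademacherExp_const_mul, mul_pow]
  calc |a j| * B ^ j * rademacherExp m (fun ε => ‖rademacherTensor x ε j‖)
      ≤ |a j| * B ^ j * (√m * bx ^ j) := by
        gcongr; exact rademacherExp_norm_rademacherTensor_le hbx hx j
    _ = √m * (|a j| * (B ^ j * bx ^ j)) := by ring

end TwoLayer

theorem stmt12_general (b B bx : ℝ) (hb : 0 < b) (hB : 0 < B) (hbx : 0 < bx)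
    (n d m : ℕ)
    (a : ℕ → ℝ) (ha0 : a 0 = 0) (σ : ℝ → ℝ)
    (hσ : ∀ z : ℝ, |z| ≤ B * bx → HasSum (fun j : ℕ => a j * z ^ j) (σ z))
    (hsum : Summable fun j : ℕ => |a j| * (B * bx) ^ j)
    (x : Fin m → Fin d → ℝ) (hx : ∀ i, euclNorm (x i) ≤ bx) :
    rademacherExp m (fun ε =>
        ⨆ p : {p : (Fin n → ℝ) × Matrix (Fin n) (Fin d) ℝ //
                euclNorm p.1 ≤ b ∧ specNorm p.2 ≤ B},
          (1 / (m : ℝ)) * ∑ i, ε i * ∑ l, p.1.1 l * σ (p.1.2.mulVec (x i) l))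
      ≤ b * (∑' j : ℕ, |a j| * (B * bx) ^ j) / Real.sqrt m := by
  set S := fun ε : Fin m → ℝ => ∑' j, |a j| * B ^ j * ‖rademacherTensor x ε j‖
  calc _ ≤ rademacherExp m (fun ε => 1 / (m : ℝ) * (b * S ε)) :=
        rademacherExp_mono fun ε => Real.iSup_le
          (fun p => mul_le_mul_of_nonneg_left
            (sum_mul_neuron_le hb.le hB.le ha0 hσ hsum hx p.2.1 p.2.2 ε) (by positivity))
          (by have : 0 ≤ S ε := tsum_nonneg fun j => by positivity
              positivity)
    _ = 1 / m * b * rademacherExp m S := by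
      rw [rademacherExp_const_mul, rademacherExp_const_mul, mul_assoc]
    _ ≤ 1 / m * b * (√m * ∑' j, |a j| * (B * bx) ^ j) := by
      gcongr
      exact rademacherExp_tsum_mul_norm_rademacherTensor_le hB.le hbx.le hsum hx
    _ = b * (∑' j, |a j| * (B * bx) ^ j) * (√m / m) := by ring
    _ = b * (∑' j, |a j| * (B * bx) ^ j) / √m := by rw [Real.sqrt_div_self', mul_one_div]

/-- For an activation `σ(z) = ∑_{j≥1} a_j z^j` (for `|z| ≤ B b_x`), the Rademacher
complexity of `{x ↦ uᵀσ(Wx) : ‖u‖ ≤ b, ‖W‖ ≤ B}` on `m` points of norm at most `b_x`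
is at most `b·σ̃(B b_x)/√m` where `σ̃(z) = ∑_j |a_j| z^j`. -/
theorem stmt12 (b B bx : ℝ) (hb : 0 < b) (hB : 0 < B) (hbx : 0 < bx)
    (n d m : ℕ) (hn : 1 ≤ n) (hd : 1 ≤ d) (hm : 1 ≤ m)
    (a : ℕ → ℝ) (ha0 : a 0 = 0) (σ : ℝ → ℝ)
    (hσ : ∀ z : ℝ, |z| ≤ B * bx → HasSum (fun j : ℕ => a j * z ^ j) (σ z))
    (hsum : Summable fun j : ℕ => |a j| * (B * bx) ^ j)
    (x : Fin m → Fin d → ℝ) (hx : ∀ i, euclNorm (x i) ≤ bx) :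
    rademacherExp m (fun ε =>
        ⨆ p : {p : (Fin n → ℝ) × Matrix (Fin n) (Fin d) ℝ //
                euclNorm p.1 ≤ b ∧ specNorm p.2 ≤ B},
          (1 / (m : ℝ)) * ∑ i, ε i * ∑ l, p.1.1 l * σ (p.1.2.mulVec (x i) l))
      ≤ b * (∑' j : ℕ, |a j| * (B * bx) ^ j) / Real.sqrt m :=
  stmt12_general b B bx hb hB hbx n d m a ha0 σ hσ hsum x hx
end

section
/- For nonnegative integers p, let x^1,…,x^p ∈ ℝ^{3^p} be vectorizations of order-p tensors of dimensions 3×⋯×3, where x^i has a single entry equal to 1 at index (j_1,…,j_p) with j_i = 3 and j_r = 2 for r ≠ i, and all other entries 0. For any y ∈ {0,1}^p, define the filter w as the order-p tensor of dimensions 2×⋯×2 with a single entry 1 at index (y_1+1,…,y_p+1) and zeros elsewhere. Let N_w(x) = max over base indices (j_1,…,j_p) ∈ {1,2}^p of the inner product of w with the 2×⋯×2 sub-tensor of x at base index (j_1,…,j_p). Then N_w(x^i) = y_i for every i ∈ [p]. -/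
/-- The inner product of the `2×⋯×2` filter `w` with the `2×⋯×2` patch of the
`3×⋯×3` order-`p` tensor `x` at base index `b` (0-indexed):
`∑_{Δ∈{0,1}^p} w_Δ · x_{b+Δ}`. -/
noncomputable def patchVal (p : ℕ) (x : (Fin p → Fin 3) → ℝ)
    (w : (Fin p → Fin 2) → ℝ) (b : Fin p → Fin 2) : ℝ :=
  ∑ Δ : Fin p → Fin 2, w Δ *
    x (fun t => (⟨(b t).val + (Δ t).val, by
      have h1 := (b t).isLt; have h2 := (Δ t).isLt; omega⟩ : Fin 3))

/-- Shattering construction: with inputs `x^i` having a single `1` entry at index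
`(2,…,2,3,2,…,2)` (the `3` at position `i`), and filter `w` having a single `1` entry
at index `(y_1+1,…,y_p+1)`, the max-pooled convolution satisfies `N_w(x^i) = y_i`. -/
theorem stmt18 (p : ℕ) (y : Fin p → Fin 2)
    (x : Fin p → (Fin p → Fin 3) → ℝ)
    (hx : ∀ i j, x i j =
      if ((j i : ℕ) = 2 ∧ ∀ r, r ≠ i → (j r : ℕ) = 1) then 1 else 0)
    (w : (Fin p → Fin 2) → ℝ) (hw : ∀ q, w q = if q = y then 1 else 0) :
    ∀ i, (⨆ b : Fin p → Fin 2, patchVal p (x i) w b) = ((y i : ℕ) : ℝ) := by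
  intro i
  have key : ∀ b : Fin p → Fin 2, patchVal p (x i) w b =
      if ((b i).val + (y i).val = 2 ∧ ∀ r, r ≠ i → (b r).val + (y r).val = 1)
      then 1 else 0 := by
    intro b
    unfold patchVal
    rw [Finset.sum_eq_single y]
    · rw [hw, if_pos rfl, one_mul, hx]
    · intro Δ _ hΔ; rw [hw, if_neg hΔ, zero_mul]
    · intro h; exact absurd (Finset.mem_univ y) h
  have hyi := (y i).isLt
  have : (y i).val = 0 ∨ (y i).val = 1 := by omega
  rcases this with h0 | h1
  · -- y i = 0 : every patch value is 0
    have hz : ∀ b : Fin p → Fin 2, patchVal p (x i) w b = 0 := by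
      intro b
      rw [key, if_neg]
      rintro ⟨h2, -⟩
      have := (b i).isLt
      omega
    simp [hz, h0]
  · -- y i = 1 : sup is 1
    have hbdd : BddAbove (Set.range fun b => patchVal p (x i) w b) :=
      (Set.finite_range _).bddAbove
    set b₀ : Fin p → Fin 2 := fun t =>
      if t = i then ⟨1, by omega⟩ else ⟨1 - (y t).val, by omega⟩ with hb₀
    have hval : patchVal p (x i) w b₀ = 1 := by
      rw [key, if_pos]
      constructor
      · simp [hb₀, h1]
      · intro r hr
        have := (y r).isLt
        simp [hb₀, hr]
        omega
    have hle : (⨆ b : Fin p → Fin 2, patchVal p (x i) w b) ≤ 1 := by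
      apply ciSup_le
      intro b
      rw [key]
      split <;> norm_num
    have hge : (1 : ℝ) ≤ ⨆ b : Fin p → Fin 2, patchVal p (x i) w b := by
      rw [← hval]
      exact le_ciSup hbdd b₀
    rw [h1]
    norm_num
    linarith
end
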